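/- arXiv:2303.09788 — 3 statements merged into one kernel-verified Lean document; each statement's English description precedes it below -/
import Mathlib

section
/- If a density operator ρ and a pure state |ψ⟩ on a finite-dimensional Hilbert space satisfy a := ⟨ψ|ρ|ψ⟩, then ‖ρ − |ψ⟩⟨ψ|‖₁ ≤ 2√(1−a). -/
open Matrix
open scoped ComplexOrder

/-- The square root of a positive semidefinite matrix (removed from Mathlib; old definition). -/
noncomputable def Matrix.PosSemidef.sqrt {n 𝕜 : Type*} [Fintype n] [DecidableEq n] [RCLike 𝕜]
    {A : Matrix n n 𝕜} (hA : A.PosSemidef) : Matrix n n 𝕜 :=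
  hA.1.eigenvectorUnitary.1 * diagonal ((↑) ∘ (√·) ∘ hA.1.eigenvalues) *
    (star hA.1.eigenvectorUnitary : Matrix n n 𝕜)

section SqrtAux
open scoped MatrixOrder

lemma Matrix.PosSemidef.sqrt_eq_cfc_sqrt {n 𝕜 : Type*} [Fintype n] [DecidableEq n] [RCLike 𝕜]
    {A : Matrix n n 𝕜} (hA : A.PosSemidef) : hA.sqrt = CFC.sqrt A := by
  rw [CFC.sqrt_eq_cfc, cfc_nnreal_eq_real _ A, hA.1.cfc_eq, Matrix.PosSemidef.sqrt]
  simp only [IsHermitian.cfc, Unitary.conjStarAlgAut_apply]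
  congr 3
  funext i
  simp [Real.coe_sqrt, Real.coe_toNNReal', max_eq_left (hA.eigenvalues_nonneg i)]

lemma Matrix.PosSemidef.posSemidef_sqrt {n 𝕜 : Type*} [Fintype n] [DecidableEq n] [RCLike 𝕜]
    {A : Matrix n n 𝕜} (hA : A.PosSemidef) : hA.sqrt.PosSemidef := by
  rw [hA.sqrt_eq_cfc_sqrt]
  exact (CFC.sqrt_nonneg A).posSemidef

lemma Matrix.PosSemidef.sqrt_mul_self {n 𝕜 : Type*} [Fintype n] [DecidableEq n] [RCLike 𝕜]
    {A : Matrix n n 𝕜} (hA : A.PosSemidef) : hA.sqrt * hA.sqrt = A := by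
  rw [hA.sqrt_eq_cfc_sqrt]
  exact CFC.sqrt_mul_sqrt_self A hA.nonneg

lemma Matrix.PosSemidef.eq_sqrt_of_sq_eq {n 𝕜 : Type*} [Fintype n] [DecidableEq n] [RCLike 𝕜]
    {A : Matrix n n 𝕜} (hA : A.PosSemidef) {B : Matrix n n 𝕜} (hB : B.PosSemidef)
    (hAB : A ^ 2 = B) : A = hB.sqrt := by
  rw [hB.sqrt_eq_cfc_sqrt]
  exact (CFC.sqrt_unique (by rw [← hAB, sq]) hA.nonneg).symm

end SqrtAux

/-- The trace norm ‖A‖₁ = tr √(AᴴA) of a square complex matrix. -/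
noncomputable def traceNorm {m : Type*} [Fintype m] [DecidableEq m]
    (A : Matrix m m ℂ) : ℝ :=
  (Matrix.PosSemidef.sqrt (Matrix.posSemidef_conjTranspose_mul_self A)).trace.re

section Aux
variable {m : Type*} [Fintype m] [DecidableEq m]

omit [DecidableEq m] in
private lemma fvdg_dot_cs (x y : m → ℂ) :
    ‖star x ⬝ᵥ y‖ ^ 2 ≤ (star x ⬝ᵥ x).re * (star y ⬝ᵥ y).re := by
  let X : EuclideanSpace ℂ m := (WithLp.equiv 2 _).symm x
  let Y : EuclideanSpace ℂ m := (WithLp.equiv 2 _).symm y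
  have h := norm_inner_le_norm (𝕜 := ℂ) X Y
  have hX : ‖X‖ ^ 2 = (star x ⬝ᵥ x).re := by
    rw [← inner_self_eq_norm_sq (𝕜 := ℂ), dotProduct_comm]; rfl
  have hY : ‖Y‖ ^ 2 = (star y ⬝ᵥ y).re := by
    rw [← inner_self_eq_norm_sq (𝕜 := ℂ), dotProduct_comm]; rfl
  have hXY : (inner ℂ X Y : ℂ) = star x ⬝ᵥ y := by rw [dotProduct_comm]; rfl
  calc ‖star x ⬝ᵥ y‖ ^ 2 = ‖(inner ℂ X Y : ℂ)‖ ^ 2 := by rw [hXY]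
    _ ≤ (‖X‖ * ‖Y‖) ^ 2 := by apply pow_le_pow_left₀ (norm_nonneg _) h
    _ = (star x ⬝ᵥ x).re * (star y ⬝ᵥ y).re := by rw [mul_pow, hX, hY]

omit [DecidableEq m] in
private lemma fvdg_re_dot_self_eq (w : m → ℂ) : (star w ⬝ᵥ w).re = ∑ i, ‖w i‖ ^ 2 := by
  rw [dotProduct, Complex.re_sum]
  congr 1
  funext i
  simp [Pi.star_apply, RCLike.star_def, ← Complex.normSq_eq_norm_sq,
    Complex.normSq_eq_conj_mul_self, Complex.normSq_apply]

private lemma fvdg_psd_dot_sqrt {M : Matrix m m ℂ} (hM : M.PosSemidef) (u v : m → ℂ) :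
    star u ⬝ᵥ M *ᵥ v = star (hM.sqrt *ᵥ u) ⬝ᵥ (hM.sqrt *ᵥ v) := by
  conv_lhs => rw [← hM.sqrt_mul_self]
  rw [← mulVec_mulVec, dotProduct_mulVec, star_mulVec, hM.posSemidef_sqrt.1.eq]

private lemma fvdg_psd_cs {M : Matrix m m ℂ} (hM : M.PosSemidef) (u v : m → ℂ) :
    ‖star u ⬝ᵥ M *ᵥ v‖ ^ 2 ≤ (star u ⬝ᵥ M *ᵥ u).re * (star v ⬝ᵥ M *ᵥ v).re := by
  rw [fvdg_psd_dot_sqrt hM u v, fvdg_psd_dot_sqrt hM u u, fvdg_psd_dot_sqrt hM v v]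
  exact fvdg_dot_cs _ _

omit [DecidableEq m] in
private lemma fvdg_frob_bound (C : Matrix m m ℂ) (u : m → ℂ) :
    (star (C *ᵥ u) ⬝ᵥ (C *ᵥ u)).re ≤ (star u ⬝ᵥ u).re * (Cᴴ * C).trace.re := by
  have hrow : ∀ j, (C j ⬝ᵥ star (C j)).re = ∑ i, ‖C j i‖ ^ 2 := by
    intro j
    have h0 := fvdg_re_dot_self_eq (star (C j))
    rw [star_star] at h0
    rw [h0]
    congr 1
    funext i
    simp
  have htr : (Cᴴ * C).trace.re = ∑ j, ∑ i, ‖C j i‖ ^ 2 := by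
    rw [trace, Complex.re_sum, Finset.sum_comm]
    congr 1
    funext j
    rw [diag_apply, mul_apply, Complex.re_sum]
    congr 1
    funext x
    simp [conjTranspose_apply, RCLike.star_def, ← Complex.normSq_eq_norm_sq, Complex.normSq_apply]
  rw [fvdg_re_dot_self_eq, htr, Finset.mul_sum]
  apply Finset.sum_le_sum
  intro j _
  have h := fvdg_dot_cs (star (C j)) u
  rw [star_star] at h
  have hCj : (C *ᵥ u) j = C j ⬝ᵥ u := rfl
  rw [hCj, ← hrow j, mul_comm]
  exact h

private lemma fvdg_psd_trace_bound {M : Matrix m m ℂ} (hM : M.PosSemidef) (u : m → ℂ) :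
    (star u ⬝ᵥ M *ᵥ u).re ≤ (star u ⬝ᵥ u).re * M.trace.re := by
  have h := fvdg_frob_bound hM.sqrt u
  rw [← fvdg_psd_dot_sqrt hM u u] at h
  rwa [hM.posSemidef_sqrt.1.eq, hM.sqrt_mul_self] at h

private lemma fvdg_psd_trace_re_nonneg {M : Matrix m m ℂ} (hM : M.PosSemidef) :
    0 ≤ M.trace.re := by
  rw [trace, Complex.re_sum]
  apply Finset.sum_nonneg
  intro i _
  have h := hM.re_dotProduct_nonneg (Pi.single i 1)
  have he : star (Pi.single i 1 : m → ℂ) ⬝ᵥ M *ᵥ (Pi.single i 1) = M i i := by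
    simp [mulVec_single, dotProduct, Pi.single_apply, apply_ite]
  rw [he] at h
  exact h

omit [DecidableEq m] in
private lemma fvdg_trace_vecMulVec_mul (a b : m → ℂ) (C : Matrix m m ℂ) :
    (vecMulVec a b * C).trace = b ⬝ᵥ (C *ᵥ a) := by
  rw [trace]
  simp only [diag_apply, mul_apply, vecMulVec_apply, dotProduct, mulVec, dotProduct]
  rw [Finset.sum_comm]
  apply Finset.sum_congr rfl
  intro j _
  rw [Finset.mul_sum]
  apply Finset.sum_congr rfl
  intro i _
  ring

private lemma fvdg_trace_conj_unitary (U D : Matrix m m ℂ) (hU : U ∈ Matrix.unitaryGroup m ℂ) :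
    (U * D * star U).trace = D.trace := by
  rw [trace_mul_cycle, mem_unitaryGroup_iff'.mp hU, one_mul]

private lemma fvdg_traceNorm_of_hermitian {A : Matrix m m ℂ} (hA : A.IsHermitian) :
    traceNorm A = ∑ i, |hA.eigenvalues i| := by
  set U : Matrix m m ℂ := (hA.eigenvectorUnitary : Matrix m m ℂ) with hUdef
  have hUmem : U ∈ Matrix.unitaryGroup m ℂ := hA.eigenvectorUnitary.2
  have hsUU : star U * U = 1 := mem_unitaryGroup_iff'.mp hUmem
  have key : ∀ D E : Matrix m m ℂ, (U * D * star U) * (U * E * star U) = U * (D * E) * star U := by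
    intro D E
    have h1 : (U * D * star U) * (U * E * star U) = U * (D * ((star U * U) * (E * star U))) := by
      simp only [mul_assoc]
    rw [h1, hsUU, one_mul]; simp only [mul_assoc]
  have hspec : A = U * diagonal (RCLike.ofReal ∘ hA.eigenvalues) * star U := hA.spectral_theorem
  set B : Matrix m m ℂ := U * diagonal (fun i => Complex.ofReal |hA.eigenvalues i|) * star U
    with hBdef
  have hBpsd : B.PosSemidef := by
    apply Matrix.PosSemidef.mul_mul_conjTranspose_same
    refine posSemidef_diagonal_iff.mpr fun i => ?_
    exact_mod_cast Complex.zero_le_real.mpr (abs_nonneg _)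
  have hdd : diagonal (fun i => Complex.ofReal |hA.eigenvalues i|) *
      diagonal (fun i => Complex.ofReal |hA.eigenvalues i|) =
      diagonal (RCLike.ofReal ∘ hA.eigenvalues) * diagonal (RCLike.ofReal ∘ hA.eigenvalues) := by
    rw [diagonal_mul_diagonal, diagonal_mul_diagonal]
    have hfun : (fun i => Complex.ofReal |hA.eigenvalues i| * Complex.ofReal |hA.eigenvalues i|) =
        fun i => (RCLike.ofReal ∘ hA.eigenvalues) i * (RCLike.ofReal ∘ hA.eigenvalues) i := by
      funext i
      show Complex.ofReal |hA.eigenvalues i| * Complex.ofReal |hA.eigenvalues i| =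
        Complex.ofReal (hA.eigenvalues i) * Complex.ofReal (hA.eigenvalues i)
      rw [← Complex.ofReal_mul, ← Complex.ofReal_mul, abs_mul_abs_self]
    exact congrArg diagonal hfun
  have hB2 : B ^ 2 = Aᴴ * A := by
    rw [hA.eq, pow_two, hBdef, key, hdd, ← key, ← hspec]
  have hsqrt : B = (Matrix.posSemidef_conjTranspose_mul_self A).sqrt :=
    hBpsd.eq_sqrt_of_sq_eq _ hB2
  rw [traceNorm, ← hsqrt, hBdef, fvdg_trace_conj_unitary _ _ hUmem, trace_diagonal,
    Complex.re_sum]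
  simp

private lemma fvdg_key_real (s t a : ℝ) (hs0 : 0 ≤ s) (hs1 : s ≤ 1) (ht0 : 0 ≤ t) (ht1 : t ≤ 1)
    (ha0 : 0 ≤ a) (h : a ≤ (Real.sqrt (s*t) + Real.sqrt ((1-s)*(1-t)))^2) :
    t - s ≤ Real.sqrt (1 - a) := by
  set p := Real.sqrt (s*t) with hp
  set q := Real.sqrt ((1-s)*(1-t)) with hq
  have hs1' : (0:ℝ) ≤ 1 - s := by linarith
  have ht1' : (0:ℝ) ≤ 1 - t := by linarith
  have hp0 : 0 ≤ p := Real.sqrt_nonneg _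
  have hq0 : 0 ≤ q := Real.sqrt_nonneg _
  have hp2 : p^2 = s*t := Real.sq_sqrt (mul_nonneg hs0 ht0)
  have hq2 : q^2 = (1-s)*(1-t) := Real.sq_sqrt (mul_nonneg hs1' ht1')
  have e1 : p*q = Real.sqrt (s*(1-s)) * Real.sqrt (t*(1-t)) := by
    rw [hp, hq, ← Real.sqrt_mul (mul_nonneg hs0 ht0), ← Real.sqrt_mul (mul_nonneg hs0 hs1')]
    congr 1; ring
  have ha2 : (Real.sqrt (s*(1-s)))^2 = s*(1-s) := Real.sq_sqrt (mul_nonneg hs0 hs1')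
  have hb2 : (Real.sqrt (t*(1-t)))^2 = t*(1-t) := Real.sq_sqrt (mul_nonneg ht0 ht1')
  have hamgm : 2*(p*q) ≤ s*(1-s) + t*(1-t) :=
    calc 2*(p*q) = 2 * Real.sqrt (s*(1-s)) * Real.sqrt (t*(1-t)) := by rw [e1]; ring
      _ ≤ (Real.sqrt (s*(1-s)))^2 + (Real.sqrt (t*(1-t)))^2 := two_mul_le_add_sq _ _
      _ = s*(1-s) + t*(1-t) := by rw [ha2, hb2]
  have hsq : (t - s)^2 ≤ 1 - a := by nlinarith
  calc t - s ≤ |t - s| := le_abs_self _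
    _ = Real.sqrt ((t-s)^2) := (Real.sqrt_sq_eq_abs _).symm
    _ ≤ Real.sqrt (1 - a) := Real.sqrt_le_sqrt hsq

end Aux

theorem fuchs_van_de_graaf_pure {m : Type*} [Fintype m] [DecidableEq m]
    (ρ : Matrix m m ℂ) (hρ : ρ.PosSemidef) (hτ : ρ.trace = 1)
    (ψ : m → ℂ) (hψ : star ψ ⬝ᵥ ψ = 1) :
    traceNorm (ρ - Matrix.vecMulVec ψ (star ψ)) ≤
      2 * Real.sqrt (1 - (star ψ ⬝ᵥ ρ.mulVec ψ).re) := by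
  classical
  set P : Matrix m m ℂ := Matrix.vecMulVec ψ (star ψ) with hPdef
  have hPherm : P.IsHermitian := by
    ext i j
    simp [hPdef, vecMulVec_apply, conjTranspose_apply, mul_comm]
  set Δ : Matrix m m ℂ := ρ - P with hΔdef
  have hΔherm : Δ.IsHermitian := hρ.1.sub hPherm
  set U : Matrix m m ℂ := (hΔherm.eigenvectorUnitary : Matrix m m ℂ) with hUdef
  have hUmem : U ∈ Matrix.unitaryGroup m ℂ := hΔherm.eigenvectorUnitary.2
  have hsUU : star U * U = 1 := mem_unitaryGroup_iff'.mp hUmem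
  have hUsU : U * star U = 1 := mem_unitaryGroup_iff.mp hUmem
  have key : ∀ D E : Matrix m m ℂ, (U * D * star U) * (U * E * star U) = U * (D * E) * star U := by
    intro D E
    have h1 : (U * D * star U) * (U * E * star U) = U * (D * ((star U * U) * (E * star U))) := by
      simp only [mul_assoc]
    rw [h1, hsUU, one_mul]; simp only [mul_assoc]
  set lam : m → ℝ := hΔherm.eigenvalues with hlam
  have hspec : Δ = U * diagonal (RCLike.ofReal ∘ lam) * star U := hΔherm.spectral_theorem
  set χ : m → ℂ := fun i => if 0 < lam i then (1:ℂ) else 0 with hχ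
  set Pr : Matrix m m ℂ := U * diagonal χ * star U with hPrdef
  have hPrherm : Pr.IsHermitian := by
    have hχstar : star χ = χ := by
      funext i
      simp only [Pi.star_apply, hχ]
      split_ifs <;> simp
    show Prᴴ = Pr
    rw [hPrdef, star_eq_conjTranspose, conjTranspose_mul, conjTranspose_mul,
      conjTranspose_conjTranspose, diagonal_conjTranspose, hχstar, mul_assoc]
  have hPridem : Pr * Pr = Pr := by
    rw [hPrdef, key, diagonal_mul_diagonal]
    have hχχ : (fun i => χ i * χ i) = χ := by
      funext i
      simp only [hχ]
      split_ifs <;> simp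
    rw [hχχ]
  have hPrpsd : Pr.PosSemidef := by
    have : Pr = U * diagonal χ * Uᴴ := hPrdef
    rw [this]
    apply Matrix.PosSemidef.mul_mul_conjTranspose_same
    refine posSemidef_diagonal_iff.mpr fun i => ?_
    by_cases h : 0 < lam i <;> simp [hχ, h]
  have hcompl : 1 - Pr = U * diagonal (fun i => 1 - χ i) * star U := by
    have hds : diagonal (fun i => 1 - χ i) = 1 - diagonal χ := by
      rw [← diagonal_one, ← diagonal_sub]
    rw [hds, mul_sub, sub_mul, mul_one, hUsU, hPrdef]
  have hPrcpsd : (1 - Pr).PosSemidef := by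
    rw [hcompl]
    apply Matrix.PosSemidef.mul_mul_conjTranspose_same
    refine posSemidef_diagonal_iff.mpr fun i => ?_
    by_cases h : 0 < lam i <;> simp [hχ, h]
  -- traces
  have htraceP : P.trace = 1 := by
    rw [hPdef, trace]
    rw [← hψ, dotProduct]
    apply Finset.sum_congr rfl
    intro i _
    simp [vecMulVec_apply, mul_comm]
  have htraceΔ : Δ.trace = 0 := by
    rw [hΔdef, trace_sub, hτ, htraceP, sub_self]
  have hsum_lamC : ∑ i, (lam i : ℂ) = 0 := by
    have h1 : Δ.trace = ∑ i, (lam i : ℂ) := by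
      rw [hspec, fvdg_trace_conj_unitary _ _ hUmem, trace_diagonal]
      rfl
    rw [← h1, htraceΔ]
  have hsum_lam : ∑ i, lam i = 0 := by
    have := congrArg Complex.re hsum_lamC
    rwa [Complex.re_sum] at this
  -- dot product helper
  have herm_dot : ∀ (N : Matrix m m ℂ), N.IsHermitian → ∀ x z : m → ℂ,
      star (N *ᵥ x) ⬝ᵥ z = star x ⬝ᵥ N *ᵥ z := by
    intro N hN x z
    rw [star_mulVec, hN.eq, ← dotProduct_mulVec]
  -- vectors
  set u : m → ℂ := Pr *ᵥ ψ with hu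
  set w : m → ℂ := ψ - u with hw
  have hψuw : ψ = u + w := by rw [hw]; abel
  have hufix : Pr *ᵥ u = u := by rw [hu, mulVec_mulVec, hPridem]
  have hc_herm : (1 - Pr).IsHermitian := (isHermitian_one).sub hPrherm
  have hc_idem : (1 - Pr) * (1 - Pr) = 1 - Pr := by
    rw [mul_sub, mul_one, sub_mul, one_mul, hPridem]; abel
  have hweq : w = (1 - Pr) *ᵥ ψ := by rw [sub_mulVec, one_mulVec, hw, hu]
  have hwfix : (1 - Pr) *ᵥ w = w := by
    conv_lhs => rw [hweq]
    rw [mulVec_mulVec, hc_idem, ← hweq]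
  -- quantities
  set a : ℝ := (star ψ ⬝ᵥ ρ.mulVec ψ).re with ha
  set s : ℝ := (star ψ ⬝ᵥ u).re with hs
  set t : ℝ := ((ρ * Pr).trace).re with ht
  -- trace identities
  have htPr : (Pr * ρ * Pr).trace = (ρ * Pr).trace := by
    rw [trace_mul_cycle, hPridem, trace_mul_comm]
  have hMupsd : (Pr * ρ * Pr).PosSemidef := by
    have h := hρ.mul_mul_conjTranspose_same (B := Pr)
    rwa [hPrherm.eq] at h
  have hMcpsd : ((1 - Pr) * ρ * (1 - Pr)).PosSemidef := by
    have h := hρ.mul_mul_conjTranspose_same (B := 1 - Pr)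
    rwa [hc_herm.eq] at h
  have htc : ((1 - Pr) * ρ * (1 - Pr)).trace = ρ.trace - (ρ * Pr).trace := by
    rw [trace_mul_cycle, hc_idem, trace_mul_comm, mul_sub, mul_one, trace_sub]
  have ht0 : 0 ≤ t := by
    rw [ht, ← htPr]
    exact fvdg_psd_trace_re_nonneg hMupsd
  have ht1 : t ≤ 1 := by
    have h := fvdg_psd_trace_re_nonneg hMcpsd
    rw [htc, Complex.sub_re, hτ, Complex.one_re] at h
    rw [ht]; linarith
  have hs0 : 0 ≤ s := by
    have h := hPrpsd.re_dotProduct_nonneg ψ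
    rw [hs, hu]; exact h
  have hs1 : s ≤ 1 := by
    have h := hPrcpsd.re_dotProduct_nonneg ψ
    have e : star ψ ⬝ᵥ (1 - Pr) *ᵥ ψ = 1 - star ψ ⬝ᵥ u := by
      rw [sub_mulVec, one_mulVec, dotProduct_sub, hψ, hu]
    rw [show RCLike.re (star ψ ⬝ᵥ (1 - Pr) *ᵥ ψ) = (star ψ ⬝ᵥ (1 - Pr) *ᵥ ψ).re from rfl,
      e, Complex.sub_re, Complex.one_re] at h
    rw [hs]; linarith
  have ha0 : 0 ≤ a := hρ.re_dotProduct_nonneg ψ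
  -- the positive-part projection trace identity
  have hDP : (Δ * Pr).trace = ∑ i, ((lam i : ℂ) * χ i) := by
    rw [hspec, hPrdef, key, fvdg_trace_conj_unitary _ _ hUmem, diagonal_mul_diagonal,
      trace_diagonal]
    exact Finset.sum_congr rfl fun i _ => rfl
  have hDPre : ((Δ * Pr).trace).re = ∑ i, (if 0 < lam i then lam i else 0) := by
    rw [hDP, Complex.re_sum]
    apply Finset.sum_congr rfl
    intro i _
    simp only [hχ]
    split_ifs <;> simp
  have hPPr : (P * Pr).trace = star ψ ⬝ᵥ u := by
    rw [hPdef, fvdg_trace_vecMulVec_mul, hu]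
  have hDPts : ((Δ * Pr).trace).re = t - s := by
    rw [hΔdef, sub_mul, trace_sub, hPPr, Complex.sub_re, ht, hs]
  -- trace norm value
  have hTN : traceNorm Δ = 2 * (t - s) := by
    rw [fvdg_traceNorm_of_hermitian hΔherm]
    have habs : ∑ i, |hΔherm.eigenvalues i| =
        2 * (∑ i, (if 0 < lam i then lam i else 0)) - ∑ i, lam i := by
      rw [Finset.mul_sum, ← Finset.sum_sub_distrib]
      apply Finset.sum_congr rfl
      intro i _
      rw [hlam]
      split_ifs with h
      · rw [abs_of_pos h]; ring
      · rw [abs_of_nonpos (le_of_not_gt h)]; ring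
    rw [habs, hsum_lam, sub_zero, ← hDPre, hDPts]
  -- Cauchy--Schwarz chain
  have hsu : (star u ⬝ᵥ u).re = s := by
    have e : star u ⬝ᵥ u = star ψ ⬝ᵥ u := by
      conv_lhs => rw [hu]
      rw [herm_dot Pr hPrherm, hufix]
    rw [e, hs]
  have hsw : (star w ⬝ᵥ w).re = 1 - s := by
    have e : star w ⬝ᵥ w = 1 - star ψ ⬝ᵥ u := by
      have e1 := herm_dot _ hc_herm ψ w
      rw [← hweq] at e1
      rw [e1, hwfix, hw, dotProduct_sub, hψ]
    rw [e, Complex.sub_re, Complex.one_re, hs]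
  have hQuu : (star u ⬝ᵥ ρ *ᵥ u).re ≤ s * t := by
    have e : star u ⬝ᵥ ρ *ᵥ u = star u ⬝ᵥ (Pr * ρ * Pr) *ᵥ u := by
      rw [← mulVec_mulVec, ← mulVec_mulVec, hufix, ← herm_dot Pr hPrherm, hufix]
    have h := fvdg_psd_trace_bound hMupsd u
    rw [← e, hsu, htPr, ← ht] at h
    exact h
  have hQww : (star w ⬝ᵥ ρ *ᵥ w).re ≤ (1 - s) * (1 - t) := by
    have e : star w ⬝ᵥ ρ *ᵥ w = star w ⬝ᵥ ((1 - Pr) * ρ * (1 - Pr)) *ᵥ w := by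
      rw [← mulVec_mulVec, ← mulVec_mulVec, hwfix, ← herm_dot _ hc_herm, hwfix]
    have h := fvdg_psd_trace_bound hMcpsd w
    rw [← e, hsw, htc, Complex.sub_re, hτ, Complex.one_re, ← ht] at h
    exact h
  have hQuu0 : 0 ≤ (star u ⬝ᵥ ρ *ᵥ u).re := hρ.re_dotProduct_nonneg u
  have hQww0 : 0 ≤ (star w ⬝ᵥ ρ *ᵥ w).re := hρ.re_dotProduct_nonneg w
  have hst0 : (0:ℝ) ≤ s * t := mul_nonneg hs0 ht0
  have hc0 : (0:ℝ) ≤ (1 - s) * (1 - t) := mul_nonneg (by linarith) (by linarith)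
  have hQuw : (star u ⬝ᵥ ρ *ᵥ w).re ≤
      Real.sqrt (s * t) * Real.sqrt ((1 - s) * (1 - t)) := by
    have hcs := fvdg_psd_cs hρ u w
    have hle : ‖star u ⬝ᵥ ρ *ᵥ w‖ ^ 2 ≤ (s * t) * ((1 - s) * (1 - t)) :=
      le_trans hcs (mul_le_mul hQuu hQww hQww0 hst0)
    calc (star u ⬝ᵥ ρ *ᵥ w).re ≤ ‖star u ⬝ᵥ ρ *ᵥ w‖ := Complex.re_le_norm _
      _ = Real.sqrt (‖star u ⬝ᵥ ρ *ᵥ w‖ ^ 2) := (Real.sqrt_sq (norm_nonneg _)).symm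
      _ ≤ Real.sqrt ((s * t) * ((1 - s) * (1 - t))) := Real.sqrt_le_sqrt hle
      _ = Real.sqrt (s * t) * Real.sqrt ((1 - s) * (1 - t)) := Real.sqrt_mul hst0 _
  -- expansion of a
  have hconj : star w ⬝ᵥ ρ *ᵥ u = star (star u ⬝ᵥ ρ *ᵥ w) := by
    rw [star_dotProduct, star_mulVec, hρ.1.eq, ← dotProduct_mulVec]
  have hexp : a = (star u ⬝ᵥ ρ *ᵥ u).re + 2 * (star u ⬝ᵥ ρ *ᵥ w).re
      + (star w ⬝ᵥ ρ *ᵥ w).re := by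
    have e : star ψ ⬝ᵥ ρ *ᵥ ψ = star u ⬝ᵥ ρ *ᵥ u + star u ⬝ᵥ ρ *ᵥ w
        + star w ⬝ᵥ ρ *ᵥ u + star w ⬝ᵥ ρ *ᵥ w := by
      conv_lhs => rw [hψuw]
      rw [star_add, mulVec_add, add_dotProduct, dotProduct_add, dotProduct_add]
      ring
    rw [ha]
    show (star ψ ⬝ᵥ ρ *ᵥ ψ).re = _
    rw [e, hconj]
    simp only [Complex.add_re]
    have : (star (star u ⬝ᵥ ρ *ᵥ w)).re = (star u ⬝ᵥ ρ *ᵥ w).re := by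
      rw [RCLike.star_def, Complex.conj_re]
    rw [this]
    ring
  -- main bound
  have hmain : a ≤ (Real.sqrt (s*t) + Real.sqrt ((1-s)*(1-t)))^2 := by
    have hp2 : (Real.sqrt (s*t))^2 = s*t := Real.sq_sqrt hst0
    have hq2 : (Real.sqrt ((1-s)*(1-t)))^2 = (1-s)*(1-t) := Real.sq_sqrt hc0
    nlinarith [hexp, hQuu, hQww, hQuw]
  have hfinal := fvdg_key_real s t a hs0 hs1 ht0 ht1 ha0 hmain
  have hgoal : traceNorm Δ ≤ 2 * Real.sqrt (1 - a) := by
    rw [hTN]; linarith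
  exact hgoal
end

section
/- Averaging conjugation by controlled-Pauli gates over all n-qubit Pauli strings performs Hamiltonian controllization: for any traceless Hermitian H on the n-qubit space, (1/4^n) Σ_v (ctrl-σ_v)(I ⊗ H)(ctrl-σ_v) = [[H, 0],[0, 0]], the block-diagonal operator H ⊕ 0 on ℂ² ⊗ H. -/
open Matrix

/-- Single-qubit Pauli matrices: σ₀ = I, σ₁ = X, σ₂ = Y, σ₃ = Z. -/
def pauli : Fin 4 → Matrix (Fin 2) (Fin 2) ℂ
  | 0 => 1
  | 1 => !![0, 1; 1, 0]
  | 2 => !![0, -Complex.I; Complex.I, 0]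
  | 3 => !![1, 0; 0, -1]

/-- The n-fold tensor product σ_u = σ_{u_1} ⊗ ... ⊗ σ_{u_n}, realized as a matrix
indexed by `Fin n → Fin 2`. -/
def pauliString (n : ℕ) (u : Fin n → Fin 4) : Matrix (Fin n → Fin 2) (Fin n → Fin 2) ℂ :=
  Matrix.of fun i j => ∏ k, pauli (u k) (i k) (j k)


/-- The controlled-σ_v gate |0⟩⟨0| ⊗ I + |1⟩⟨1| ⊗ σ_v on ℂ² ⊗ (ℂ²)^⊗n. -/
def ctrlPauli (n : ℕ) (v : Fin n → Fin 4) :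
    Matrix ((Fin n → Fin 2) ⊕ (Fin n → Fin 2)) ((Fin n → Fin 2) ⊕ (Fin n → Fin 2)) ℂ :=
  Matrix.fromBlocks 1 0 0 (pauliString n v)

lemma pauli_single (i j k l : Fin 2) :
    ∑ a : Fin 4, pauli a i k * pauli a l j = if i = j ∧ k = l then 2 else 0 := by
  fin_cases i <;> fin_cases j <;> fin_cases k <;> fin_cases l <;>
    simp [pauli, Fin.sum_univ_four, Matrix.one_apply] <;> ring

lemma pauli_key (n : ℕ) (i j k l : Fin n → Fin 2) :
    ∑ v : Fin n → Fin 4,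
      (∏ m, pauli (v m) (i m) (k m)) * ∏ m, pauli (v m) (l m) (j m)
      = if i = j ∧ k = l then 2 ^ n else 0 := by
  have h1 : ∀ v : Fin n → Fin 4,
      (∏ m, pauli (v m) (i m) (k m)) * ∏ m, pauli (v m) (l m) (j m)
      = ∏ m, (pauli (v m) (i m) (k m) * pauli (v m) (l m) (j m)) := fun v =>
    (Finset.prod_mul_distrib).symm
  simp_rw [h1]
  rw [← Fintype.piFinset_univ, ← Finset.prod_univ_sum (fun _ => (Finset.univ : Finset (Fin 4)))
    (fun m a => pauli a (i m) (k m) * pauli a (l m) (j m))]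
  simp_rw [pauli_single]
  by_cases h : i = j ∧ k = l
  · obtain ⟨h1, h2⟩ := h
    subst h1; subst h2
    simp
  · rw [if_neg h]
    have : ∃ m, ¬ (i m = j m ∧ k m = l m) := by
      by_contra hc
      push_neg at hc
      exact h ⟨funext fun m => (hc m).1, funext fun m => (hc m).2⟩
    obtain ⟨m, hm⟩ := this
    exact Finset.prod_eq_zero (Finset.mem_univ m) (if_neg hm)

lemma twirl (n : ℕ) (H : Matrix (Fin n → Fin 2) (Fin n → Fin 2) ℂ) :
    ∑ v : Fin n → Fin 4, pauliString n v * H * pauliString n v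
      = ((2 : ℂ) ^ n * H.trace) • 1 := by
  ext i j
  have expand : ∀ v : Fin n → Fin 4,
      (pauliString n v * H * pauliString n v) i j
      = ∑ k, ∑ l, H k l *
          ((∏ m, pauli (v m) (i m) (k m)) * ∏ m, pauli (v m) (l m) (j m)) := by
    intro v
    simp only [Matrix.mul_apply, pauliString, Matrix.of_apply, Finset.sum_mul]
    rw [Finset.sum_comm]
    refine Finset.sum_congr rfl fun k _ => Finset.sum_congr rfl fun l _ => by ring
  rw [Matrix.sum_apply]
  simp_rw [expand]
  rw [Finset.sum_comm]
  have swap2 : ∀ k, (∑ v : Fin n → Fin 4, ∑ l, H k l *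
        ((∏ m, pauli (v m) (i m) (k m)) * ∏ m, pauli (v m) (l m) (j m)))
      = ∑ l, H k l * ∑ v : Fin n → Fin 4,
        ((∏ m, pauli (v m) (i m) (k m)) * ∏ m, pauli (v m) (l m) (j m)) := by
    intro k
    rw [Finset.sum_comm]
    exact Finset.sum_congr rfl fun l _ => (Finset.mul_sum _ _ _).symm
  simp_rw [swap2, pauli_key]
  by_cases hij : i = j
  · subst hij
    simp only [true_and, Matrix.smul_apply, Matrix.one_apply_eq, smul_eq_mul, mul_one]
    rw [Matrix.trace, Finset.mul_sum]
    refine Finset.sum_congr rfl fun k _ => ?_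
    rw [Finset.sum_eq_single k (fun l _ hl => by rw [if_neg (fun h => hl h.symm), mul_zero])
      (fun h => absurd (Finset.mem_univ k) h)]
    rw [if_pos rfl]
    simp [Matrix.diag]
    ring
  · simp only [hij, false_and, if_false, mul_zero, Finset.sum_const_zero,
      Matrix.smul_apply, Matrix.one_apply_ne hij, smul_eq_mul, mul_zero]

theorem controllization (n : ℕ) (H : Matrix (Fin n → Fin 2) (Fin n → Fin 2) ℂ)
    (hH : H.IsHermitian) (htr : H.trace = 0) :
    ((1 : ℂ) / 4 ^ n) • ∑ v : Fin n → Fin 4,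
        ctrlPauli n v * Matrix.fromBlocks H 0 0 H * ctrlPauli n v
      = Matrix.fromBlocks H 0 0 0 := by
  have hblock : ∀ v : Fin n → Fin 4,
      ctrlPauli n v * Matrix.fromBlocks H 0 0 H * ctrlPauli n v
      = Matrix.fromBlocks H 0 0 (pauliString n v * H * pauliString n v) := by
    intro v
    simp [ctrlPauli, Matrix.fromBlocks_multiply, Matrix.mul_assoc]
  simp_rw [hblock]
  have hsum : ∑ v : Fin n → Fin 4,
      Matrix.fromBlocks H 0 0 (pauliString n v * H * pauliString n v)
      = Matrix.fromBlocks ((4 ^ n : ℂ) • H) 0 0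
          (∑ v : Fin n → Fin 4, pauliString n v * H * pauliString n v) := by
    ext (i | i) (j | j) <;>
      simp [Matrix.sum_apply, Finset.sum_const, Fintype.card_fun]
  rw [hsum, twirl, htr, mul_zero, zero_smul]
  ext (i | i) (j | j) <;>
    simp [div_mul_cancel₀, (pow_ne_zero n (by norm_num : (4:ℂ) ≠ 0))]
end

section
/- If the singular value decomposition of A is A = Σ_j λ_j |l_j⟩⟨r_j| with 0 < λ_j ≤ 1, then the matrix exponential of i·H'(A), where H'(A) = [[0, A†],[A, 0]] on ℂ² ⊗ H, equals the direct sum over j of the 2×2 rotation blocks [[cos λ_j, i sin λ_j],[i sin λ_j, cos λ_j]] in the bases (|0⟩|r_j⟩, |1⟩|l_j⟩). -/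
open Matrix

lemma ccos_aux (x : ℝ) : Complex.exp (Complex.I * x) + Complex.exp (-(Complex.I * x))
    = 2 * (Real.cos x : ℂ) := by
  rw [mul_comm, ← neg_mul, Complex.exp_mul_I, Complex.exp_mul_I, Complex.cos_neg,
    Complex.sin_neg, Complex.ofReal_cos]
  ring

lemma csin_aux (x : ℝ) : Complex.exp (Complex.I * x) - Complex.exp (-(Complex.I * x))
    = 2 * (Complex.I * (Real.sin x : ℂ)) := by
  rw [mul_comm, ← neg_mul, Complex.exp_mul_I, Complex.exp_mul_I, Complex.cos_neg,
    Complex.sin_neg, Complex.ofReal_sin]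
  ring

-- exp of I • [[0,Λ],[Λ,0]] with Λ real diagonal
theorem exp_aux {κ : Type*} [Fintype κ] [DecidableEq κ] (c : κ → ℝ) :
    NormedSpace.exp (Complex.I • Matrix.fromBlocks 0 (Matrix.diagonal fun j => (c j : ℂ))
        (Matrix.diagonal fun j => (c j : ℂ)) (0 : Matrix κ κ ℂ))
      = Matrix.fromBlocks (Matrix.diagonal fun j => (Real.cos (c j) : ℂ))
          (Matrix.diagonal fun j => Complex.I * (Real.sin (c j) : ℂ))
          (Matrix.diagonal fun j => Complex.I * (Real.sin (c j) : ℂ))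
          (Matrix.diagonal fun j => (Real.cos (c j) : ℂ)) := by
  classical
  set V : Matrix (κ ⊕ κ) (κ ⊕ κ) ℂ := Matrix.fromBlocks 1 1 1 (-1) with hV
  have hVV : V * ((2:ℂ)⁻¹ • V) = 1 := by
    rw [hV, Matrix.mul_smul, Matrix.fromBlocks_multiply]
    ext i j
    rcases i with i|i <;> rcases j with j|j <;>
      simp [Matrix.one_apply, Matrix.smul_apply, two_mul] <;> split <;> norm_num
  have hVunit : IsUnit V := ⟨⟨V, _, hVV, mul_eq_one_comm.mp hVV⟩, rfl⟩
  have hVinv : V⁻¹ = (2:ℂ)⁻¹ • V := Matrix.inv_eq_right_inv hVV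
  set w : κ ⊕ κ → ℂ := Sum.elim (fun j => Complex.I * c j) (fun j => -(Complex.I * c j)) with hw
  have hconj : Complex.I • Matrix.fromBlocks 0 (Matrix.diagonal fun j => (c j : ℂ))
      (Matrix.diagonal fun j => (c j : ℂ)) (0 : Matrix κ κ ℂ)
      = V * Matrix.diagonal w * V⁻¹ := by
    rw [hVinv, hw, ← Matrix.fromBlocks_diagonal, hV, Matrix.mul_smul,
      Matrix.fromBlocks_multiply, Matrix.fromBlocks_multiply, Matrix.fromBlocks_smul,
      Matrix.fromBlocks_smul, Matrix.fromBlocks_inj]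
    refine ⟨?_, ?_, ?_, ?_⟩ <;>
      · ext i j
        simp only [Matrix.smul_apply, Matrix.add_apply, Matrix.neg_apply, Matrix.mul_one,
          Matrix.one_mul, Matrix.mul_zero, Matrix.zero_mul, add_zero, zero_add, Matrix.mul_neg, Matrix.neg_mul, neg_zero,
          Matrix.zero_apply, smul_zero, Matrix.diagonal_apply, smul_eq_mul]
        split
        · ring
        · simp
  rw [hconj, Matrix.exp_conj V _ hVunit, Matrix.exp_diagonal, hVinv, hw]
  have hexp : NormedSpace.exp (Sum.elim (fun j => Complex.I * (c j:ℂ))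
      (fun j => -(Complex.I * (c j:ℂ))) : κ ⊕ κ → ℂ)
      = Sum.elim (fun j => Complex.exp (Complex.I * c j))
          (fun j => Complex.exp (-(Complex.I * c j))) := by
    ext x
    rcases x with i|i <;> simp [Pi.coe_exp, ← Complex.exp_eq_exp_ℂ]
  rw [hexp, ← Matrix.fromBlocks_diagonal, Matrix.mul_smul, Matrix.fromBlocks_multiply,
    Matrix.fromBlocks_multiply, Matrix.fromBlocks_smul, Matrix.fromBlocks_inj]
  refine ⟨?_, ?_, ?_, ?_⟩ <;>
    · ext i j
      simp only [Matrix.smul_apply, Matrix.add_apply, Matrix.neg_apply, Matrix.mul_one,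
        Matrix.one_mul, Matrix.mul_zero, Matrix.zero_mul, add_zero, zero_add, Matrix.mul_neg, Matrix.neg_mul, neg_zero,
        Matrix.zero_apply, smul_zero, Matrix.diagonal_apply, smul_eq_mul, sub_neg_eq_add,
        neg_neg]
      split
      · first
          | (rw [ccos_aux]; ring)
          | (rw [← sub_eq_add_neg, csin_aux]; ring)
      · simp

theorem exp_block_offdiag_svd {κ : Type*} [Fintype κ] [DecidableEq κ]
    (lam : κ → ℝ) (hlam : ∀ j, 0 < lam j ∧ lam j ≤ 1)
    (r l : κ → (κ → ℂ))
    (hr : ∀ j j', star (r j) ⬝ᵥ r j' = if j = j' then 1 else 0)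
    (hl : ∀ j j', star (l j) ⬝ᵥ l j' = if j = j' then 1 else 0)
    (A : Matrix κ κ ℂ)
    (hA : A = ∑ j, (lam j : ℂ) • Matrix.vecMulVec (l j) (star (r j))) :
    NormedSpace.exp (Complex.I • Matrix.fromBlocks 0 Aᴴ A (0 : Matrix κ κ ℂ))
      = ∑ j,
        ((Real.cos (lam j) : ℂ) •
          (Matrix.vecMulVec (Sum.elim (r j) 0) (star (Sum.elim (r j) (0 : κ → ℂ))) +
           Matrix.vecMulVec (Sum.elim 0 (l j)) (star (Sum.elim (0 : κ → ℂ) (l j)))) +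
         (Complex.I * (Real.sin (lam j) : ℂ)) •
          (Matrix.vecMulVec (Sum.elim (r j) 0) (star (Sum.elim (0 : κ → ℂ) (l j))) +
           Matrix.vecMulVec (Sum.elim 0 (l j)) (star (Sum.elim (r j) (0 : κ → ℂ))))) := by
  classical
  set R : Matrix κ κ ℂ := Matrix.of fun i j => r j i with hRdef
  set L : Matrix κ κ ℂ := Matrix.of fun i j => l j i with hLdef
  have hRR : Rᴴ * R = 1 := by
    ext j j'
    simpa [Matrix.mul_apply, Matrix.conjTranspose_apply, Matrix.one_apply, dotProduct,
      hRdef] using hr j j'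
  have hLL : Lᴴ * L = 1 := by
    ext j j'
    simpa [Matrix.mul_apply, Matrix.conjTranspose_apply, Matrix.one_apply, dotProduct,
      hLdef] using hl j j'
  set U : Matrix (κ ⊕ κ) (κ ⊕ κ) ℂ := Matrix.fromBlocks R 0 0 L with hUdef
  have hUU : Uᴴ * U = 1 := by
    rw [hUdef, Matrix.fromBlocks_conjTranspose, Matrix.fromBlocks_multiply]
    simp [hRR, hLL, ← Matrix.fromBlocks_one]
  have hUunit : IsUnit U := ⟨⟨U, Uᴴ, mul_eq_one_comm.mp hUU, hUU⟩, rfl⟩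
  have hUinv : U⁻¹ = Uᴴ := Matrix.inv_eq_left_inv hUU
  set Lam : Matrix κ κ ℂ := Matrix.diagonal fun j => ((lam j : ℝ) : ℂ) with hLamdef
  have hALR : L * Lam * Rᴴ = A := by
    rw [hA]
    ext i k
    simp only [Matrix.mul_apply, Matrix.conjTranspose_apply, Matrix.sum_apply,
      Matrix.smul_apply, Matrix.vecMulVec_apply, Pi.star_apply, hLamdef,
      Matrix.diagonal_apply, mul_ite, mul_zero, ite_mul, zero_mul,
      Finset.sum_ite_eq, Finset.sum_ite_eq', Finset.mem_univ, if_true, hLdef, hRdef, Matrix.of_apply,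
      smul_eq_mul]
    exact Finset.sum_congr rfl fun x _ => by rw [RCLike.star_def]; ring
  have hLamH : Lamᴴ = Lam := by
    rw [hLamdef, Matrix.diagonal_conjTranspose, Matrix.diagonal_eq_diagonal_iff]
    intro j
    exact Complex.conj_ofReal _
  have hARL : R * Lam * Lᴴ = Aᴴ := by
    rw [← hALR, Matrix.conjTranspose_mul, Matrix.conjTranspose_mul,
      Matrix.conjTranspose_conjTranspose, hLamH, Matrix.mul_assoc]
  have hkey : Complex.I • Matrix.fromBlocks 0 Aᴴ A (0 : Matrix κ κ ℂ)
      = U * (Complex.I • Matrix.fromBlocks 0 Lam Lam 0) * U⁻¹ := by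
    rw [hUinv, Matrix.mul_smul, Matrix.smul_mul]
    congr 1
    rw [hUdef, Matrix.fromBlocks_conjTranspose, Matrix.fromBlocks_multiply,
      Matrix.fromBlocks_multiply]
    simp only [Matrix.mul_zero, Matrix.zero_mul, Matrix.mul_one, Matrix.one_mul,
      add_zero, zero_add,
      Matrix.conjTranspose_zero]
    rw [hARL, hALR]
  rw [hkey, Matrix.exp_conj U _ hUunit, hLamdef, exp_aux lam, hUinv, hUdef,
    Matrix.fromBlocks_conjTranspose, Matrix.fromBlocks_multiply, Matrix.fromBlocks_multiply]
  ext i k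
  rcases i with i|i <;> rcases k with k|k <;>
    simp only [Matrix.fromBlocks_apply₁₁, Matrix.fromBlocks_apply₁₂, Matrix.fromBlocks_apply₂₁,
      Matrix.fromBlocks_apply₂₂, Matrix.sum_apply, Matrix.add_apply, Matrix.smul_apply,
      Matrix.vecMulVec_apply, Pi.star_apply, Sum.elim_inl, Sum.elim_inr, Pi.zero_apply,
      star_zero, mul_zero, zero_mul, add_zero, zero_add, smul_eq_mul,
      Matrix.mul_apply, Matrix.conjTranspose_apply, Matrix.diagonal_apply, mul_ite, ite_mul,
      Matrix.mul_zero, Matrix.zero_mul,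
      Matrix.of_apply, Finset.sum_ite_eq, Finset.sum_ite_eq', Finset.mem_univ, if_true,
      Matrix.zero_apply, smul_zero, hRdef, hLdef, Finset.sum_const_zero,
      RCLike.star_def] <;>
    refine Finset.sum_congr rfl fun x _ => by ring
end
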